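/- arXiv:2310.20032 — 5 statements merged into one kernel-verified Lean document; each statement's English description precedes it below -/
import Mathlib

section
/- Let A be a finite nonempty Sidon set of integers with k := |A|, and let T be a positive integer. Then (diam(A) + T) · (T·(T + k − 1) − (2·S(A,T) + V(A,T))) = k²·T². (Equivalently, diam(A) = k²T² / (T(T + k − 1) − (2S(A,T) + V(A,T))) − T.) -/
open scoped Classical

noncomputable section

/-- A finite set of integers is a Sidon set if all nontrivial solutions to
`a - b = c - d` are excluded. -/
def IsSidon (A : Finset ℤ) : Prop :=
  ∀ a ∈ A, ∀ b ∈ A, ∀ c ∈ A, ∀ d ∈ A, a - b = c - d → (a = b ∧ c = d) ∨ (a = c ∧ b = d)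

/-- The minimum of a finite set of integers (junk value `0` for `∅`). -/
def Amin (A : Finset ℤ) : ℤ := A.min.getD 0

/-- The maximum of a finite set of integers (junk value `0` for `∅`). -/
def Amax (A : Finset ℤ) : ℤ := A.max.getD 0

/-- The diameter `max A - min A` of a finite set of integers. -/
def diam (A : Finset ℤ) : ℤ := Amax A - Amin A

/-- `A_i^{(T)}`, the number of elements of `A` in the window `[i - T, i)`. -/
def wc (A : Finset ℤ) (T i : ℤ) : ℕ := (A.filter (fun a => i - T ≤ a ∧ a < i)).card

/-- `Ā(A,T) = |A|·T/(T + diam A)`. -/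
def Abar (A : Finset ℤ) (T : ℤ) : ℚ := ((A.card : ℚ) * (T : ℚ)) / ((T : ℚ) + (diam A : ℚ))

/-- `V(A,T)`, the total squared deviation of the window counts from `Ā(A,T)`. -/
def V (A : Finset ℤ) (T : ℤ) : ℚ :=
  ∑ i ∈ Finset.Icc (Amin A + 1) (Amax A + T), ((wc A T i : ℚ) - Abar A T) ^ 2

/-- `S(A,T) = Σ (T - r)` over `1 ≤ r ≤ T - 1` not of the form `a - b` with `a, b ∈ A`. -/
def S (A : Finset ℤ) (T : ℤ) : ℤ :=
  ∑ r ∈ Finset.Icc 1 (T - 1), if ∃ a ∈ A, ∃ b ∈ A, a - b = r then 0 else T - r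

lemma Amin_le {A : Finset ℤ} (hA : A.Nonempty) {a : ℤ} (ha : a ∈ A) : Amin A ≤ a := by
  have h := A.min'_le a ha
  have : Amin A = A.min' hA := by rw [Amin, ← Finset.coe_min' hA]; rfl
  omega

lemma le_Amax {A : Finset ℤ} (hA : A.Nonempty) {a : ℤ} (ha : a ∈ A) : a ≤ Amax A := by
  have h := A.le_max' a ha
  have : Amax A = A.max' hA := by rw [Amax, ← Finset.coe_max' hA]; rfl
  omega

lemma Amax_mem {A : Finset ℤ} (hA : A.Nonempty) : Amax A ∈ A := by
  have h := A.max'_mem hA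
  have : Amax A = A.max' hA := by rw [Amax, ← Finset.coe_max' hA]; rfl
  rwa [this]

lemma wc_cast (A : Finset ℤ) (T i : ℤ) :
    (wc A T i : ℤ) = ∑ a ∈ A, if i - T ≤ a ∧ a < i then 1 else 0 := by
  rw [wc, Finset.card_filter]
  push_cast
  rfl

lemma abs_min_max (a b T : ℤ) : min a b + T - max a b = T - |a - b| := by
  rcases le_total a b with h | h
  · rw [min_eq_left h, max_eq_right h, abs_of_nonpos (by omega)]; ring
  · rw [min_eq_right h, max_eq_left h, abs_of_nonneg (by omega)]; ring

lemma gauss (T : ℤ) (hT : 0 < T) :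
    2 * ∑ r ∈ Finset.Icc (1:ℤ) (T - 1), (T - r) = T * (T - 1) := by
  have h1 : ∑ r ∈ Finset.Icc (1:ℤ) (T - 1), (T - r) = ∑ r ∈ Finset.Icc (1:ℤ) (T - 1), r := by
    refine Finset.sum_nbij' (fun r => T - r) (fun r => T - r) ?_ ?_ ?_ ?_ ?_
    · intro r hr; rw [Finset.mem_Icc] at hr ⊢; omega
    · intro r hr; rw [Finset.mem_Icc] at hr ⊢; omega
    · intro r _; ring
    · intro r _; ring
    · intro r _; rfl
  have h2 : ∑ r ∈ Finset.Icc (1:ℤ) (T - 1), (T - r) + ∑ r ∈ Finset.Icc (1:ℤ) (T - 1), r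
      = ∑ r ∈ Finset.Icc (1:ℤ) (T - 1), T := by
    rw [← Finset.sum_add_distrib]
    exact Finset.sum_congr rfl fun r _ => by ring
  have h3 : ∑ r ∈ Finset.Icc (1:ℤ) (T - 1), T = (T - 1) * T := by
    rw [Finset.sum_const, nsmul_eq_mul, Int.card_Icc]
    have : ((T - 1 + 1 - 1).toNat : ℤ) = T - 1 := by omega
    rw [this]
  rw [two_mul]
  nth_rewrite 2 [h1]
  rw [h2, h3]; ring

lemma sum_wc (A : Finset ℤ) (hA : A.Nonempty) (T : ℤ) (hT : 0 < T) :
    ∑ i ∈ Finset.Icc (Amin A + 1) (Amax A + T), (wc A T i : ℤ) = A.card * T := by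
  simp_rw [wc_cast]
  rw [Finset.sum_comm]
  rw [Finset.sum_congr rfl (fun a ha => ?_), Finset.sum_const, nsmul_eq_mul]
  rw [Finset.sum_boole]
  have hm := Amin_le hA ha
  have hM := le_Amax hA ha
  have : (Finset.Icc (Amin A + 1) (Amax A + T)).filter (fun i => i - T ≤ a ∧ a < i)
      = Finset.Icc (a + 1) (a + T) := by
    ext i
    simp only [Finset.mem_filter, Finset.mem_Icc]
    omega
  rw [this, Int.card_Icc]
  omega

lemma sum_wc_sq (A : Finset ℤ) (hA : A.Nonempty) (hS : IsSidon A) (T : ℤ) (hT : 0 < T) :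
    ∑ i ∈ Finset.Icc (Amin A + 1) (Amax A + T), (wc A T i : ℤ) ^ 2
      = A.card * T + T * (T - 1) - 2 * S A T := by
  have key : ∀ i, (wc A T i : ℤ) ^ 2
      = ∑ p ∈ A ×ˢ A, if (i - T ≤ p.1 ∧ p.1 < i) ∧ (i - T ≤ p.2 ∧ p.2 < i) then 1 else 0 := by
    intro i
    rw [sq, wc_cast, Finset.sum_mul_sum, Finset.sum_product]
    refine Finset.sum_congr rfl fun a _ => Finset.sum_congr rfl fun b _ => ?_
    split_ifs <;> simp_all
  simp_rw [key]
  rw [Finset.sum_comm]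
  have step1 : ∀ p ∈ A ×ˢ A,
      (∑ i ∈ Finset.Icc (Amin A + 1) (Amax A + T),
        if (i - T ≤ p.1 ∧ p.1 < i) ∧ (i - T ≤ p.2 ∧ p.2 < i) then (1:ℤ) else 0)
       = ((T - |p.1 - p.2|).toNat : ℤ) := by
    rintro ⟨a, b⟩ hp
    rw [Finset.mem_product] at hp
    have h1 := Amin_le hA hp.1
    have h2 := le_Amax hA hp.1
    have h3 := Amin_le hA hp.2
    have h4 := le_Amax hA hp.2
    dsimp only
    rw [Finset.sum_boole]
    have heq : (Finset.Icc (Amin A + 1) (Amax A + T)).filter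
        (fun i => (i - T ≤ a ∧ a < i) ∧ (i - T ≤ b ∧ b < i))
        = Finset.Icc (max a b + 1) (min a b + T) := by
      ext i
      simp only [Finset.mem_filter, Finset.mem_Icc]
      omega
    rw [heq, Int.card_Icc]
    have := abs_min_max a b T
    omega
  rw [Finset.sum_congr rfl step1]
  rw [← Finset.diag_union_offDiag A, Finset.sum_union (Finset.disjoint_diag_offDiag A),
    Finset.sum_diag]
  have hdiag : ∑ a ∈ A, ((T - |(a, a).1 - (a, a).2|).toNat : ℤ) = A.card * T := by
    rw [Finset.sum_congr rfl (fun a _ => ?_), Finset.sum_const, nsmul_eq_mul]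
    simp; omega
  rw [hdiag]
  -- off-diagonal part
  set B : Finset ℤ := A.offDiag.image (fun p => p.1 - p.2) with hB
  have hinj : ∀ p ∈ A.offDiag, ∀ q ∈ A.offDiag, p.1 - p.2 = q.1 - q.2 → p = q := by
    rintro ⟨a, b⟩ hp ⟨c, d⟩ hq h
    rw [Finset.mem_offDiag] at hp hq
    rcases hS a hp.1 b hp.2.1 c hq.1 d hq.2.1 h with ⟨h1, _⟩ | ⟨h1, h2⟩
    · exact absurd h1 hp.2.2
    · simp [h1, h2]
  have himg : ∑ p ∈ A.offDiag, ((T - |p.1 - p.2|).toNat : ℤ)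
      = ∑ r ∈ B, ((T - |r|).toNat : ℤ) :=
    (Finset.sum_image (f := fun r : ℤ => ((T - |r|).toNat : ℤ)) hinj).symm
  rw [himg]
  have hBmem : ∀ r : ℤ, r ∈ B ↔ (r ≠ 0 ∧ ∃ a ∈ A, ∃ b ∈ A, a - b = r) := by
    intro r
    constructor
    · rintro hr
      rw [hB, Finset.mem_image] at hr
      obtain ⟨⟨a, b⟩, hp, rfl⟩ := hr
      rw [Finset.mem_offDiag] at hp
      exact ⟨fun h => hp.2.2 (by omega), a, hp.1, b, hp.2.1, rfl⟩
    · rintro ⟨hne, a, ha, b, hb, rfl⟩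
      rw [hB, Finset.mem_image]
      exact ⟨(a, b), Finset.mem_offDiag.2 ⟨ha, hb, fun h => hne (by omega)⟩, rfl⟩
  have hsym : ∀ r ∈ B, -r ∈ B := by
    intro r hr
    rw [hBmem] at hr ⊢
    obtain ⟨hne, a, ha, b, hb, rfl⟩ := hr
    exact ⟨by omega, b, hb, a, ha, by ring⟩
  have hsplit : ∑ r ∈ B, ((T - |r|).toNat : ℤ)
      = ∑ r ∈ B.filter (fun r => 0 < r), ((T - |r|).toNat : ℤ)
        + ∑ r ∈ B.filter (fun r => ¬ 0 < r), ((T - |r|).toNat : ℤ) :=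
    (Finset.sum_filter_add_sum_filter_not B _ _).symm
  have hneg : ∑ r ∈ B.filter (fun r => ¬ 0 < r), ((T - |r|).toNat : ℤ)
      = ∑ r ∈ B.filter (fun r => 0 < r), ((T - |r|).toNat : ℤ) := by
    refine Finset.sum_nbij' (fun r => -r) (fun r => -r) ?_ ?_ ?_ ?_ ?_
    · intro r hr
      rw [Finset.mem_filter] at hr ⊢
      have h0 : r ≠ 0 := ((hBmem r).1 hr.1).1
      have h1 : ¬ 0 < r := hr.2
      exact ⟨hsym r hr.1, by omega⟩
    · intro r hr
      rw [Finset.mem_filter] at hr ⊢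
      have h1 : 0 < r := hr.2
      exact ⟨hsym r hr.1, by omega⟩
    · intro a _; ring
    · intro a _; ring
    · intro a _; rw [abs_neg]
  rw [hsplit, hneg, ← two_mul]
  have hshrink : ∑ r ∈ B.filter (fun r => 0 < r), ((T - |r|).toNat : ℤ)
      = ∑ r ∈ B.filter (fun r => 0 < r ∧ r ≤ T - 1), ((T - |r|).toNat : ℤ) := by
    refine (Finset.sum_subset ?_ ?_).symm
    · intro r hr
      rw [Finset.mem_filter] at hr ⊢
      exact ⟨hr.1, hr.2.1⟩
    · intro r hr hr2
      rw [Finset.mem_filter] at hr hr2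
      have hpos : 0 < r := hr.2
      have habs : |r| = r := abs_of_pos hpos
      have : ¬ (0 < r ∧ r ≤ T - 1) := fun h => hr2 ⟨hr.1, h⟩
      omega
  have hset : B.filter (fun r => 0 < r ∧ r ≤ T - 1)
      = (Finset.Icc 1 (T - 1)).filter (fun r => ∃ a ∈ A, ∃ b ∈ A, a - b = r) := by
    ext r
    rw [Finset.mem_filter, Finset.mem_filter, Finset.mem_Icc, hBmem]
    constructor
    · rintro ⟨⟨hne, hex⟩, hpos, hle⟩
      exact ⟨⟨by omega, hle⟩, hex⟩
    · rintro ⟨⟨h1, h2⟩, hex⟩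
      exact ⟨⟨by omega, hex⟩, by omega, h2⟩
  have hval : ∑ r ∈ (Finset.Icc 1 (T - 1)).filter (fun r => ∃ a ∈ A, ∃ b ∈ A, a - b = r),
      ((T - |r|).toNat : ℤ)
      = ∑ r ∈ Finset.Icc 1 (T - 1),
          (if ∃ a ∈ A, ∃ b ∈ A, a - b = r then T - r else 0) := by
    rw [Finset.sum_filter]
    refine Finset.sum_congr rfl fun r hr => ?_
    rw [Finset.mem_Icc] at hr
    have habs : |r| = r := abs_of_pos (by omega)
    split_ifs
    · omega
    · rfl
  rw [hshrink, hset, hval]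
  have hcomb : (∑ r ∈ Finset.Icc 1 (T - 1),
      (if ∃ a ∈ A, ∃ b ∈ A, a - b = r then T - r else 0)) + S A T
      = ∑ r ∈ Finset.Icc (1:ℤ) (T - 1), (T - r) := by
    rw [S, ← Finset.sum_add_distrib]
    refine Finset.sum_congr rfl fun r _ => ?_
    split_ifs <;> ring
  have hg := gauss T hT
  linarith


/-- The Erdős–Turán Sidon Set Equality (ETSSE):
for a finite nonempty Sidon set `A` with `k = |A|` and a positive integer `T`,
`(diam A + T) · (T·(T + k − 1) − (2·S(A,T) + V(A,T))) = k²·T²`. -/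
theorem etsse (A : Finset ℤ) (hA : A.Nonempty) (hSidon : IsSidon A)
    (T : ℤ) (hT : 0 < T) :
    ((diam A : ℚ) + (T : ℚ)) *
      ((T : ℚ) * ((T : ℚ) + (A.card : ℚ) - 1) - (2 * (S A T : ℚ) + V A T)) =
    (A.card : ℚ) ^ 2 * (T : ℚ) ^ 2 := by
  have hmM : Amin A ≤ Amax A := Amin_le hA (Amax_mem hA)
  set I := Finset.Icc (Amin A + 1) (Amax A + T) with hI
  have hcard : (I.card : ℚ) = (diam A : ℚ) + T := by
    rw [hI, Int.card_Icc]
    have : ((Amax A + T + 1 - (Amin A + 1)).toNat : ℤ) = diam A + T := by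
      rw [diam]; omega
    exact_mod_cast congrArg (fun z : ℤ => (z : ℚ)) this
  have h1 : ∑ i ∈ I, (wc A T i : ℚ) = (A.card : ℚ) * T := by
    have h := sum_wc A hA T hT
    have h' : ((∑ i ∈ I, (wc A T i : ℤ) : ℤ) : ℚ) = ((A.card * T : ℤ) : ℚ) := by
      exact_mod_cast congrArg (fun z : ℤ => (z : ℚ)) h
    push_cast at h'
    exact h'
  have h2 : ∑ i ∈ I, (wc A T i : ℚ) ^ 2
      = (A.card : ℚ) * T + T * (T - 1) - 2 * (S A T : ℚ) := by
    have h := sum_wc_sq A hA hSidon T hT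
    have h' : ((∑ i ∈ I, (wc A T i : ℤ) ^ 2 : ℤ) : ℚ)
        = ((A.card * T + T * (T - 1) - 2 * S A T : ℤ) : ℚ) := by
      exact_mod_cast congrArg (fun z : ℤ => (z : ℚ)) h
    push_cast at h'
    exact h'
  have hV : V A T = (∑ i ∈ I, (wc A T i : ℚ) ^ 2)
      - 2 * Abar A T * (∑ i ∈ I, (wc A T i : ℚ)) + (I.card : ℚ) * (Abar A T) ^ 2 := by
    rw [V]
    have hexp : ∀ i ∈ I, ((wc A T i : ℚ) - Abar A T) ^ 2
        = (wc A T i : ℚ) ^ 2 - 2 * Abar A T * (wc A T i : ℚ) + (Abar A T) ^ 2 :=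
      fun i _ => by ring
    rw [Finset.sum_congr rfl hexp, Finset.sum_add_distrib, Finset.sum_sub_distrib,
      ← Finset.mul_sum, Finset.sum_const, nsmul_eq_mul]
  have hden : (T : ℚ) + (diam A : ℚ) ≠ 0 := by
    have h0 : (0:ℤ) < T + diam A := by rw [diam]; omega
    have : (0:ℚ) < (T : ℚ) + (diam A : ℚ) := by exact_mod_cast h0
    linarith
  rw [hV, h1, h2, hcard, Abar]
  field_simp
  ring
end
end

section
/- Fix reals τ > 0, 0 < α₁ < 1 < α₂, and c ∈ (0,1). There exists a constant C ≥ 0 (depending only on τ, α₁, α₂, c) such that: for every finite nonempty set A of integers with k := |A|, setting T := ⌈τ·k^{3/2}⌉, T′ := ⌈c·T⌉, and Ā := Ā(A,T), if 2T ≤ diam(A) ≤ k², then V(A,T′) ≥ ( ((u₂ − u₁ − c)₊ + (v₂ − v₁ − c)₊)·((c − (α₂ − α₁))₊)² + (u₁ + v₁)·((c − α₁)₊)² )·τ³·k^{5/2} − C·k², where (x)₊ := max(x, 0) and u₁, u₂, v₁, v₂ are the cutoffs of A at levels α₁, α₂ for window size T. -/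
open scoped Classical

noncomputable section

/-- The left cutoff `u` at level `α` for window size `T`: `(i₀ - min A)/T` where `i₀` is
the least `i ∈ [min A, min A + T]` with `A_i^{(T)} ≥ α·Ā(A,T)`, or `1` if none exists. -/
def uCut (A : Finset ℤ) (T : ℤ) (α : ℝ) : ℝ :=
  if ∃ i ∈ Finset.Icc (Amin A) (Amin A + T), α * (Abar A T : ℝ) ≤ (wc A T i : ℝ) then
    ((sInf {i : ℤ | i ∈ Finset.Icc (Amin A) (Amin A + T) ∧
        α * (Abar A T : ℝ) ≤ (wc A T i : ℝ)} - Amin A : ℤ) : ℝ) / (T : ℝ)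
  else 1

/-- The right cutoff `v` at level `α` for window size `T`: `(max A + T + 1 - i₀)/T` where
`i₀` is the greatest `i ∈ [max A + 1, max A + T + 1]` with `A_i^{(T)} ≥ α·Ā(A,T)`,
or `1` if none exists. -/
def vCut (A : Finset ℤ) (T : ℤ) (α : ℝ) : ℝ :=
  if ∃ i ∈ Finset.Icc (Amax A + 1) (Amax A + T + 1), α * (Abar A T : ℝ) ≤ (wc A T i : ℝ) then
    ((Amax A + T + 1 - sSup {i : ℤ | i ∈ Finset.Icc (Amax A + 1) (Amax A + T + 1) ∧
        α * (Abar A T : ℝ) ≤ (wc A T i : ℝ)} : ℤ) : ℝ) / (T : ℝ)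
  else 1


namespace VarAux

/-- count of A in [a,b) -/
def cnt (A : Finset ℤ) (a b : ℤ) : ℕ := (A.filter (fun x => a ≤ x ∧ x < b)).card

lemma wc_eq (A : Finset ℤ) (T i : ℤ) : wc A T i = cnt A (i - T) i := rfl

lemma cnt_congr (A : Finset ℤ) {a b a' b' : ℤ} (h1 : a = a') (h2 : b = b') :
    cnt A a b = cnt A a' b' := by rw [h1, h2]

lemma cnt_mono (A : Finset ℤ) {a b a' b' : ℤ} (ha : a' ≤ a) (hb : b ≤ b') :
    cnt A a b ≤ cnt A a' b' := by
  apply Finset.card_le_card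
  intro x hx
  simp only [Finset.mem_filter] at *
  exact ⟨hx.1, by omega⟩

lemma cnt_split (A : Finset ℤ) {a b c : ℤ} (h1 : a ≤ b) (h2 : b ≤ c) :
    cnt A a c = cnt A a b + cnt A b c := by
  rw [cnt, cnt, cnt, ← Finset.card_union_of_disjoint]
  · congr 1
    ext x
    simp only [Finset.mem_union, Finset.mem_filter]
    constructor
    · rintro ⟨hx, h⟩
      by_cases hxb : x < b
      · exact Or.inl ⟨hx, h.1, hxb⟩
      · exact Or.inr ⟨hx, by omega, h.2⟩
    · rintro (⟨hx, h⟩ | ⟨hx, h⟩) <;> exact ⟨hx, by omega⟩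
  · rw [Finset.disjoint_left]
    intro x hx hx'
    simp only [Finset.mem_filter] at hx hx'
    omega

lemma amin_le {A : Finset ℤ} (hA : A.Nonempty) {x : ℤ} (hx : x ∈ A) : Amin A ≤ x := by
  have h := Finset.min'_le A x hx
  have h2 : Amin A = A.min' hA := by
    rw [Amin, ← Finset.coe_min' hA]; rfl
  omega

lemma le_amax {A : Finset ℤ} (hA : A.Nonempty) {x : ℤ} (hx : x ∈ A) : x ≤ Amax A := by
  have h := Finset.le_max' A x hx
  have h2 : Amax A = A.max' hA := by
    rw [Amax, ← Finset.coe_max' hA]; rfl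
  omega

lemma cnt_zero_left {A : Finset ℤ} (hA : A.Nonempty) {a b : ℤ} (h : b ≤ Amin A) :
    cnt A a b = 0 := by
  rw [cnt, Finset.card_eq_zero, Finset.filter_eq_empty_iff]
  intro x hx
  have := amin_le hA hx
  simp only [not_and, not_lt]
  omega

lemma cnt_zero_right {A : Finset ℤ} (hA : A.Nonempty) {a b : ℤ} (h : Amax A < a) :
    cnt A a b = 0 := by
  rw [cnt, Finset.card_eq_zero, Finset.filter_eq_empty_iff]
  intro x hx
  have := le_amax hA hx
  simp only [not_and, not_lt]
  omega

lemma sq_bound {w Ab Ab' cc β : ℝ} (h1 : w ≤ β * Ab) (h2 : cc * Ab ≤ Ab') (h0 : 0 ≤ Ab) :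
    (max (cc - β) 0 * Ab) ^ 2 ≤ (w - Ab') ^ 2 := by
  rcases le_or_gt (cc - β) 0 with h | h
  · rw [max_eq_right h]
    simpa using sq_nonneg (w - Ab')
  · rw [max_eq_left h.le]
    have hle : (cc - β) * Ab ≤ Ab' - w := by nlinarith
    have h0' : 0 ≤ (cc - β) * Ab := by positivity
    calc ((cc - β) * Ab) ^ 2 ≤ (Ab' - w) ^ 2 := by nlinarith
    _ = (w - Ab') ^ 2 := by ring

lemma uCut_spec (A : Finset ℤ) (T : ℤ) (hT : 0 < T) (α : ℝ) :
    ∃ i₀ : ℤ, Amin A ≤ i₀ ∧ i₀ ≤ Amin A + T + 1 ∧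
      uCut A T α * (T : ℝ) ≤ ((i₀ - Amin A : ℤ) : ℝ) ∧
      ((i₀ - Amin A : ℤ) : ℝ) ≤ uCut A T α * (T : ℝ) + 1 ∧
      (∀ i : ℤ, Amin A ≤ i → i ≤ Amin A + T → i < i₀ →
        (wc A T i : ℝ) < α * (Abar A T : ℝ)) ∧
      (i₀ ≤ Amin A + T → α * (Abar A T : ℝ) ≤ (wc A T i₀ : ℝ)) ∧
      0 ≤ uCut A T α ∧ uCut A T α ≤ 1 := by
  have hT0 : (0:ℝ) < (T:ℝ) := by exact_mod_cast hT
  by_cases h : ∃ i ∈ Finset.Icc (Amin A) (Amin A + T), α * (Abar A T : ℝ) ≤ (wc A T i : ℝ)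
  · set s : Set ℤ := {i : ℤ | i ∈ Finset.Icc (Amin A) (Amin A + T) ∧
      α * (Abar A T : ℝ) ≤ (wc A T i : ℝ)} with hs_def
    have hs : s.Nonempty := by obtain ⟨i, hi, hwi⟩ := h; exact ⟨i, hi, hwi⟩
    have hbdd : BddBelow s := ⟨Amin A, fun x hx => (Finset.mem_Icc.mp hx.1).1⟩
    have hmem : sInf s ∈ s := Int.csInf_mem hs hbdd
    obtain ⟨hmem1, hmem2⟩ := hmem
    rw [Finset.mem_Icc] at hmem1
    have hu : uCut A T α = ((sInf s - Amin A : ℤ) : ℝ) / (T : ℝ) := by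
      rw [uCut, if_pos h]
    have hut : uCut A T α * (T : ℝ) = ((sInf s - Amin A : ℤ) : ℝ) := by
      rw [hu, div_mul_cancel₀ _ hT0.ne']
    refine ⟨sInf s, hmem1.1, by omega, le_of_eq hut, by rw [hut]; linarith, ?_, fun _ => hmem2, ?_, ?_⟩
    · intro i h1 h2 hlt
      by_contra hge
      push_neg at hge
      have : sInf s ≤ i := csInf_le hbdd ⟨Finset.mem_Icc.mpr ⟨h1, h2⟩, hge⟩
      omega
    · rw [hu]
      apply div_nonneg _ hT0.le
      have : (0:ℤ) ≤ sInf s - Amin A := by omega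
      exact_mod_cast this
    · rw [hu, div_le_one hT0]
      have : sInf s - Amin A ≤ T := by omega
      exact_mod_cast this
  · have hu : uCut A T α = 1 := by rw [uCut, if_neg h]
    push_neg at h
    refine ⟨Amin A + T + 1, by omega, le_refl _, ?_, ?_, ?_, by omega, by rw [hu]; norm_num, by rw [hu]⟩
    · rw [hu, one_mul]
      push_cast
      linarith
    · rw [hu, one_mul]
      push_cast
      linarith
    · intro i h1 h2 _
      exact h i (Finset.mem_Icc.mpr ⟨h1, h2⟩)

lemma vCut_spec (A : Finset ℤ) (T : ℤ) (hT : 0 < T) (α : ℝ) :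
    ∃ i₀ : ℤ, Amax A ≤ i₀ ∧ i₀ ≤ Amax A + T + 1 ∧
      vCut A T α * (T : ℝ) ≤ ((Amax A + T + 1 - i₀ : ℤ) : ℝ) ∧
      ((Amax A + T + 1 - i₀ : ℤ) : ℝ) ≤ vCut A T α * (T : ℝ) + 1 ∧
      (∀ i : ℤ, Amax A + 1 ≤ i → i ≤ Amax A + T + 1 → i₀ < i →
        (wc A T i : ℝ) < α * (Abar A T : ℝ)) ∧
      (Amax A + 1 ≤ i₀ → α * (Abar A T : ℝ) ≤ (wc A T i₀ : ℝ)) ∧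
      0 ≤ vCut A T α ∧ vCut A T α ≤ 1 := by
  have hT0 : (0:ℝ) < (T:ℝ) := by exact_mod_cast hT
  by_cases h : ∃ i ∈ Finset.Icc (Amax A + 1) (Amax A + T + 1), α * (Abar A T : ℝ) ≤ (wc A T i : ℝ)
  · set s : Set ℤ := {i : ℤ | i ∈ Finset.Icc (Amax A + 1) (Amax A + T + 1) ∧
      α * (Abar A T : ℝ) ≤ (wc A T i : ℝ)} with hs_def
    have hs : s.Nonempty := by obtain ⟨i, hi, hwi⟩ := h; exact ⟨i, hi, hwi⟩
    have hbdd : BddAbove s := ⟨Amax A + T + 1, fun x hx => (Finset.mem_Icc.mp hx.1).2⟩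
    have hmem : sSup s ∈ s := Int.csSup_mem hs hbdd
    obtain ⟨hmem1, hmem2⟩ := hmem
    rw [Finset.mem_Icc] at hmem1
    have hu : vCut A T α = ((Amax A + T + 1 - sSup s : ℤ) : ℝ) / (T : ℝ) := by
      rw [vCut, if_pos h]
    have hut : vCut A T α * (T : ℝ) = ((Amax A + T + 1 - sSup s : ℤ) : ℝ) := by
      rw [hu, div_mul_cancel₀ _ hT0.ne']
    refine ⟨sSup s, by omega, by omega, le_of_eq hut, by rw [hut]; linarith, ?_, fun _ => hmem2, ?_, ?_⟩
    · intro i h1 h2 hlt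
      by_contra hge
      push_neg at hge
      have : i ≤ sSup s := le_csSup hbdd ⟨Finset.mem_Icc.mpr ⟨h1, h2⟩, hge⟩
      omega
    · rw [hu]
      apply div_nonneg _ hT0.le
      have : (0:ℤ) ≤ Amax A + T + 1 - sSup s := by omega
      exact_mod_cast this
    · rw [hu, div_le_one hT0]
      have : Amax A + T + 1 - sSup s ≤ T := by omega
      exact_mod_cast this
  · have hu : vCut A T α = 1 := by rw [vCut, if_neg h]
    push_neg at h
    refine ⟨Amax A, le_refl _, by omega, ?_, ?_, ?_, by omega, by rw [hu]; norm_num, by rw [hu]⟩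
    · rw [hu, one_mul]
      push_cast
      linarith
    · rw [hu, one_mul]
      push_cast
      linarith
    · intro i h1 h2 _
      exact h i (Finset.mem_Icc.mpr ⟨h1, h2⟩)

end VarAux

set_option maxHeartbeats 1000000 in
/-- The second variance bound from the two-window argument, using the smaller
window `T′ = ⌈cT⌉`: if `2T ≤ diam A ≤ k²` then
`V(A,T′) ≥ (((u₂−u₁−c)₊+(v₂−v₁−c)₊)((c−(α₂−α₁))₊)² + (u₁+v₁)((c−α₁)₊)²)·τ³·k^{5/2} − O(k²)`. -/
theorem variance_bound_two (τ α₁ α₂ c : ℝ) (hτ : 0 < τ) (hα₁ : 0 < α₁) (h₁ : α₁ < 1)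
    (h₂ : 1 < α₂) (hc0 : 0 < c) (hc1 : c < 1) :
    ∃ C : ℝ, 0 ≤ C ∧ ∀ A : Finset ℤ, A.Nonempty →
      let k : ℕ := A.card
      let T : ℤ := ⌈τ * (k : ℝ) ^ ((3 : ℝ) / 2)⌉
      let T' : ℤ := ⌈c * (T : ℝ)⌉
      2 * T ≤ diam A → diam A ≤ (k : ℤ) ^ 2 →
      let u₁ := uCut A T α₁
      let u₂ := uCut A T α₂
      let v₁ := vCut A T α₁
      let v₂ := vCut A T α₂
      (V A T' : ℝ) ≥
        ((max (u₂ - u₁ - c) 0 + max (v₂ - v₁ - c) 0) * (max (c - (α₂ - α₁)) 0) ^ 2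
            + (u₁ + v₁) * (max (c - α₁) 0) ^ 2)
          * τ ^ 3 * (k : ℝ) ^ ((5 : ℝ) / 2) - C * (k : ℝ) ^ 2 := by
  refine ⟨8 * τ ^ 4 + 4 * τ ^ 5 + 1, by positivity, ?_⟩
  intro A hA k T T' h2T hDk u₁ u₂ v₁ v₂
  -- basic facts about k and s = √k
  have hk1 : 1 ≤ k := hA.card_pos
  have hk0 : (0:ℝ) ≤ (k:ℝ) := Nat.cast_nonneg k
  set s : ℝ := (k:ℝ) ^ ((1:ℝ)/2) with hs_def
  have hs1 : 1 ≤ s := Real.one_le_rpow (by exact_mod_cast hk1) (by norm_num)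
  have hs0 : (0:ℝ) < s := lt_of_lt_of_le one_pos hs1
  have hsk : (k:ℝ) = s ^ 2 := by
    rw [hs_def, ← Real.rpow_natCast ((k:ℝ) ^ ((1:ℝ)/2)) 2, ← Real.rpow_mul hk0]; norm_num
  have hs3 : (k:ℝ) ^ ((3:ℝ)/2) = s ^ 3 := by
    rw [hs_def, ← Real.rpow_natCast ((k:ℝ) ^ ((1:ℝ)/2)) 3, ← Real.rpow_mul hk0]; norm_num
  have hs5 : (k:ℝ) ^ ((5:ℝ)/2) = s ^ 5 := by
    rw [hs_def, ← Real.rpow_natCast ((k:ℝ) ^ ((1:ℝ)/2)) 5, ← Real.rpow_mul hk0]; norm_num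
  have hs4 : (k:ℝ) ^ (2:ℕ) = s ^ 4 := by rw [hsk]; ring
  -- facts about T and T'
  have hTdef : T = ⌈τ * (k : ℝ) ^ ((3:ℝ)/2)⌉ := rfl
  have hT'def : T' = ⌈c * (T : ℝ)⌉ := rfl
  have hT0 : (0:ℤ) < T := by
    rw [hTdef]; exact Int.ceil_pos.mpr (by rw [hs3]; exact mul_pos hτ (pow_pos hs0 3))
  have hTrpos : (0:ℝ) < (T:ℝ) := by exact_mod_cast hT0
  have hT'0 : (0:ℤ) < T' := by
    rw [hT'def]; exact Int.ceil_pos.mpr (by exact mul_pos hc0 hTrpos)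
  have hT'T : T' ≤ T := by
    rw [hT'def]; exact Int.ceil_le.mpr (by nlinarith)
  have hTr : τ * s ^ 3 ≤ (T:ℝ) := by
    rw [hTdef]
    calc τ * s ^ 3 = τ * (k : ℝ) ^ ((3:ℝ)/2) := by rw [hs3]
    _ ≤ _ := Int.le_ceil _
  have hcT : c * (T:ℝ) ≤ (T':ℝ) := by
    rw [hT'def]; exact Int.le_ceil _
  have hT'c : (T':ℝ) ≤ c * (T:ℝ) + 1 := by
    rw [hT'def]; exact (Int.ceil_lt_add_one _).le
  -- cutoff specs (before setting abbreviations, so `set` rewrites them)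
  obtain ⟨i₁, hi₁m, hi₁M, hi₁l, hi₁u, hP1, hE1, hu₁0, hu₁1⟩ := VarAux.uCut_spec A T hT0 α₁
  obtain ⟨i₂, hi₂m, hi₂M, hi₂l, hi₂u, hP2, hE2, hu₂0, hu₂1⟩ := VarAux.uCut_spec A T hT0 α₂
  obtain ⟨j₁, hj₁m, hj₁M, hj₁l, hj₁u, hQ1, hF1, hv₁0, hv₁1⟩ := VarAux.vCut_spec A T hT0 α₁
  obtain ⟨j₂, hj₂m, hj₂M, hj₂l, hj₂u, hQ2, hF2, hv₂0, hv₂1⟩ := VarAux.vCut_spec A T hT0 α₂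
  rw [show uCut A T α₁ = u₁ from rfl] at hi₁l hi₁u hu₁0 hu₁1
  rw [show uCut A T α₂ = u₂ from rfl] at hi₂l hi₂u hu₂0 hu₂1
  rw [show vCut A T α₁ = v₁ from rfl] at hj₁l hj₁u hv₁0 hv₁1
  rw [show vCut A T α₂ = v₂ from rfl] at hj₂l hj₂u hv₂0 hv₂1
  have hkcard : (A.card : ℝ) = s^2 := hsk
  clear_value k T T' u₁ u₂ v₁ v₂
  set m : ℤ := Amin A with hm_def
  set M : ℤ := Amax A with hM_def
  set Ab : ℝ := ((Abar A T : ℚ) : ℝ) with hAb_def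
  set Ab' : ℝ := ((Abar A T' : ℚ) : ℝ) with hAb'_def
  have hdiam : diam A = M - m := rfl
  have hMm : 2*T ≤ M - m := by rw [← hdiam]; exact h2T
  have hDk2 : M - m ≤ (k:ℤ)^2 := by rw [← hdiam]; exact hDk
  have hDr2T : 2*(T:ℝ) ≤ ((M:ℝ) - (m:ℝ)) := by exact_mod_cast hMm
  have hDrs : ((M:ℝ) - (m:ℝ)) ≤ s^4 := by
    have h : ((M - m : ℤ) : ℝ) ≤ (((k:ℤ)^2 : ℤ) : ℝ) := by exact_mod_cast hDk2
    push_cast at h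
    rw [← hs4]; push_cast; linarith
  have hW : (0:ℝ) < (T:ℝ) + ((M:ℝ) - (m:ℝ)) := by linarith
  have hT'rpos : (0:ℝ) < (T':ℝ) := by exact_mod_cast hT'0
  have hW' : (0:ℝ) < (T':ℝ) + ((M:ℝ) - (m:ℝ)) := by linarith
  -- Abar equations
  have hAbeq : Ab * ((T:ℝ) + ((M:ℝ) - (m:ℝ))) = s^2 * (T:ℝ) := by
    rw [hAb_def, Abar, hdiam]
    push_cast
    rw [div_mul_cancel₀ _ hW.ne']
    rw [hkcard]
  have hAb'eq : Ab' * ((T':ℝ) + ((M:ℝ) - (m:ℝ))) = s^2 * (T':ℝ) := by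
    rw [hAb'_def, Abar, hdiam]
    push_cast
    rw [div_mul_cancel₀ _ hW'.ne']
    rw [hkcard]
  have hAb0 : 0 ≤ Ab := by
    have h1 : (0:ℝ) ≤ s^2 * (T:ℝ) := by positivity
    rw [← hAbeq] at h1
    exact (mul_nonneg_iff_of_pos_right hW).mp h1
  have hAb3 : Ab ≤ s^2/3 := by
    have hint : (0:ℝ) ≤ s^2 * (((M:ℝ)-(m:ℝ)) - 2*(T:ℝ)) :=
      mul_nonneg (sq_nonneg s) (by linarith)
    have h3 : Ab * ((T:ℝ) + ((M:ℝ)-(m:ℝ))) ≤ (s^2/3) * ((T:ℝ) + ((M:ℝ)-(m:ℝ))) := by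
      rw [hAbeq]; linarith [hint]
    exact le_of_mul_le_mul_right h3 hW
  have hcAb : c * Ab ≤ Ab' := by
    have e : (Ab' - c*Ab) * (((T:ℝ) + ((M:ℝ)-(m:ℝ))) * ((T':ℝ) + ((M:ℝ)-(m:ℝ))))
        = s^2 * ((T:ℝ)*(T':ℝ)*(1-c) + ((M:ℝ)-(m:ℝ))*((T':ℝ) - c*(T:ℝ))) := by
      linear_combination ((T:ℝ) + ((M:ℝ)-(m:ℝ))) * hAb'eq - c * ((T':ℝ) + ((M:ℝ)-(m:ℝ))) * hAbeq
    have hrhs : (0:ℝ) ≤ s^2 * ((T:ℝ)*(T':ℝ)*(1-c) + ((M:ℝ)-(m:ℝ))*((T':ℝ) - c*(T:ℝ))) := by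
      apply mul_nonneg (sq_nonneg s)
      have h1 : (0:ℝ) ≤ (T:ℝ)*(T':ℝ)*(1-c) := by
        apply mul_nonneg (by positivity) (by linarith)
      have h2 : (0:ℝ) ≤ ((M:ℝ)-(m:ℝ))*((T':ℝ) - c*(T:ℝ)) :=
        mul_nonneg (by linarith) (by linarith)
      linarith
    have h3 := (mul_nonneg_iff_of_pos_right (mul_pos hW hW')).mp (by rw [e]; exact hrhs)
    linarith
  -- core bound : T*Ab^2 ≥ τ³ s⁵ - (2τ⁴+τ⁵) s⁴
  have hclaim1 : τ * s^2 ≤ Ab * (τ + s) := by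
    have e1 : (Ab*(τ+s) - τ*s^2) * ((T:ℝ) + ((M:ℝ)-(m:ℝ))) = s^2*((T:ℝ)*s - τ*((M:ℝ)-(m:ℝ))) := by
      linear_combination (τ+s) * hAbeq
    have h1 : τ*((M:ℝ)-(m:ℝ)) ≤ τ*s^4 := mul_le_mul_of_nonneg_left hDrs hτ.le
    have h2 : τ*s^4 ≤ (T:ℝ)*s := by
      calc τ*s^4 = (τ*s^3)*s := by ring
      _ ≤ (T:ℝ)*s := mul_le_mul_of_nonneg_right hTr hs0.le
    have h3 : (0:ℝ) ≤ s^2*((T:ℝ)*s - τ*((M:ℝ)-(m:ℝ))) :=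
      mul_nonneg (sq_nonneg s) (by linarith)
    have h4 := (mul_nonneg_iff_of_pos_right hW).mp (by rw [e1]; exact h3)
    linarith
  have hclaim2 : τ^3 * s^7 ≤ (T:ℝ) * Ab^2 * (τ+s)^2 := by
    have h1 : (τ*s^2)^2 ≤ (Ab*(τ+s))^2 := pow_le_pow_left₀ (by positivity) hclaim1 2
    calc τ^3*s^7 = (τ*s^3) * (τ*s^2)^2 := by ring
    _ ≤ (T:ℝ) * (Ab*(τ+s))^2 := mul_le_mul hTr h1 (by positivity) hTrpos.le
    _ = (T:ℝ)*Ab^2*(τ+s)^2 := by ring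
  have hclaim3 : (τ^3*s^5 - (2*τ^4 + τ^5)*s^4) * (τ+s)^2 ≤ τ^3*s^7 := by
    have h56 : s^5 ≤ s^6 := by
      have h := mul_le_mul_of_nonneg_left hs1 (pow_nonneg hs0.le 5)
      calc s^5 = s^5 * 1 := by ring
      _ ≤ s^5 * s := h
      _ = s^6 := by ring
    have hAq : s^4 * s^2 ≤ s^4 * (τ+s)^2 := by
      have h := mul_nonneg (pow_nonneg hs0.le 4) (show (0:ℝ) ≤ τ^2 + 2*τ*s by positivity)
      nlinarith only [h]
    linarith [mul_le_mul_of_nonneg_left hAq (by positivity : (0:ℝ) ≤ 2*τ^4 + τ^5),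
      mul_le_mul_of_nonneg_left h56 (by positivity : (0:ℝ) ≤ τ^5)]
  have hTA : τ^3*s^5 - (2*τ^4 + τ^5)*s^4 ≤ (T:ℝ) * Ab^2 :=
    le_of_mul_le_mul_right (le_trans hclaim3 hclaim2) (by positivity)
  -- the four index sets
  set S₁ := Finset.Icc (m+1) (i₁-1) with hS₁
  set S₂ := Finset.Icc (i₁+T') (i₂-1) with hS₂
  set S₃ := Finset.Icc (j₁-T+T'+1) (M+T') with hS₃
  set S₄ := Finset.Icc (j₂-T+T'+1) (j₁-T) with hS₄
  have hT'1 : (1:ℤ) ≤ T' := hT'0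
  have hT1 : (1:ℤ) ≤ T := hT0
  -- per-term bounds
  have hB₁ : ∀ i ∈ S₁, (max (c - α₁) 0 * Ab)^2 ≤ ((wc A T' i : ℝ) - Ab')^2 := by
    intro i hi
    rw [hS₁, Finset.mem_Icc] at hi
    have hmono : wc A T' i ≤ wc A T i := by
      rw [VarAux.wc_eq, VarAux.wc_eq]
      exact VarAux.cnt_mono A (by omega) (le_refl i)
    have hlt : (wc A T i : ℝ) < α₁ * Ab := hP1 i (by omega) (by omega) (by omega)
    have hw : (wc A T' i : ℝ) ≤ α₁ * Ab := le_trans (by exact_mod_cast hmono) hlt.le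
    exact VarAux.sq_bound hw hcAb hAb0
  have hB₂ : ∀ i ∈ S₂, (max (c - (α₂ - α₁)) 0 * Ab)^2 ≤ ((wc A T' i : ℝ) - Ab')^2 := by
    intro i hi
    rw [hS₂, Finset.mem_Icc] at hi
    have hi₁T : i₁ ≤ m + T := by omega
    have hw₁ := hE1 hi₁T
    have e2 : VarAux.cnt A (i₁-T) i = VarAux.cnt A (i₁-T) (i-T) + VarAux.cnt A (i-T) i :=
      VarAux.cnt_split A (by omega) (by omega)
    have e1 : VarAux.cnt A (i₁-T) (i-T) = 0 := VarAux.cnt_zero_left hA (by omega)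
    have e3 : VarAux.cnt A (i₁-T) i = VarAux.cnt A (i₁-T) i₁ + VarAux.cnt A i₁ i :=
      VarAux.cnt_split A (by omega) (by omega)
    have e4 : VarAux.cnt A i₁ i = VarAux.cnt A i₁ (i-T') + VarAux.cnt A (i-T') i :=
      VarAux.cnt_split A (by omega) (by omega)
    have hnat : wc A T i₁ + wc A T' i ≤ wc A T i := by
      rw [VarAux.wc_eq A T i₁, VarAux.wc_eq A T' i, VarAux.wc_eq A T i]
      omega
    have hlt : (wc A T i : ℝ) < α₂ * Ab := hP2 i (by omega) (by omega) (by omega)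
    have hc2 : (wc A T i₁ : ℝ) + (wc A T' i : ℝ) ≤ (wc A T i : ℝ) := by exact_mod_cast hnat
    have hw : (wc A T' i : ℝ) ≤ (α₂ - α₁) * Ab := by linarith
    exact VarAux.sq_bound hw hcAb hAb0
  have hB₃ : ∀ i ∈ S₃, (max (c - α₁) 0 * Ab)^2 ≤ ((wc A T' i : ℝ) - Ab')^2 := by
    intro i hi
    rw [hS₃, Finset.mem_Icc] at hi
    have hmono : wc A T' i ≤ wc A T (i+T-T') := by
      rw [VarAux.wc_eq, VarAux.wc_eq]
      calc VarAux.cnt A (i-T') i ≤ VarAux.cnt A (i-T') (i+T-T') :=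
            VarAux.cnt_mono A (le_refl _) (by omega)
      _ = VarAux.cnt A (i+T-T'-T) (i+T-T') := VarAux.cnt_congr A (by ring) rfl
    have hlt : (wc A T (i+T-T') : ℝ) < α₁ * Ab := hQ1 (i+T-T') (by omega) (by omega) (by omega)
    have hw : (wc A T' i : ℝ) ≤ α₁ * Ab := le_trans (by exact_mod_cast hmono) hlt.le
    exact VarAux.sq_bound hw hcAb hAb0
  have hB₄ : ∀ i ∈ S₄, (max (c - (α₂ - α₁)) 0 * Ab)^2 ≤ ((wc A T' i : ℝ) - Ab')^2 := by
    intro i hi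
    rw [hS₄, Finset.mem_Icc] at hi
    have hj₁gM : M + 1 ≤ j₁ := by omega
    have hw₁ := hF1 hj₁gM
    have e2 : VarAux.cnt A (i-T') j₁ = VarAux.cnt A (i-T') (i-T'+T) + VarAux.cnt A (i-T'+T) j₁ :=
      VarAux.cnt_split A (by omega) (by omega)
    have e1 : VarAux.cnt A (i-T'+T) j₁ = 0 := VarAux.cnt_zero_right hA (by omega)
    have e3 : VarAux.cnt A (i-T') j₁ = VarAux.cnt A (i-T') i + VarAux.cnt A i j₁ :=
      VarAux.cnt_split A (by omega) (by omega)
    have e4 : VarAux.cnt A i j₁ = VarAux.cnt A i (j₁-T) + VarAux.cnt A (j₁-T) j₁ :=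
      VarAux.cnt_split A (by omega) (by omega)
    have hnat : wc A T j₁ + wc A T' i ≤ wc A T (i-T'+T) := by
      rw [VarAux.wc_eq A T j₁, VarAux.wc_eq A T' i, VarAux.wc_eq A T (i-T'+T)]
      have h5 : VarAux.cnt A (i-T'+T-T) (i-T'+T) = VarAux.cnt A (i-T') (i-T'+T) :=
        VarAux.cnt_congr A (by ring) rfl
      rw [h5]
      omega
    have hlt : (wc A T (i-T'+T) : ℝ) < α₂ * Ab := hQ2 (i-T'+T) (by omega) (by omega) (by omega)
    have hc2 : (wc A T j₁ : ℝ) + (wc A T' i : ℝ) ≤ (wc A T (i-T'+T) : ℝ) := by exact_mod_cast hnat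
    have hw : (wc A T' i : ℝ) ≤ (α₂ - α₁) * Ab := by linarith
    exact VarAux.sq_bound hw hcAb hAb0
  -- subset and disjointness
  have hU : S₁ ∪ S₂ ∪ S₃ ∪ S₄ ⊆ Finset.Icc (m+1) (M+T') := by
    intro x hx
    simp only [hS₁, hS₂, hS₃, hS₄, Finset.mem_union, Finset.mem_Icc] at hx
    rw [Finset.mem_Icc]
    omega
  have hdIcc : ∀ (a b a' b' : ℤ), b < a' → Disjoint (Finset.Icc a b) (Finset.Icc a' b') := by
    intro a b a' b' h
    rw [Finset.disjoint_left]
    intro x hx hx'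
    rw [Finset.mem_Icc] at hx hx'
    omega
  have hd12 : Disjoint S₁ S₂ := by rw [hS₁, hS₂]; exact hdIcc _ _ _ _ (by omega)
  have hd3 : Disjoint (S₁ ∪ S₂) S₃ := by
    rw [Finset.disjoint_union_left]
    constructor
    · rw [hS₁, hS₃]; exact hdIcc _ _ _ _ (by omega)
    · rw [hS₂, hS₃]; exact hdIcc _ _ _ _ (by omega)
  have hd4 : Disjoint (S₁ ∪ S₂ ∪ S₃) S₄ := by
    rw [Finset.disjoint_union_left, Finset.disjoint_union_left]
    refine ⟨⟨?_, ?_⟩, ?_⟩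
    · rw [hS₁, hS₄]; exact hdIcc _ _ _ _ (by omega)
    · rw [hS₂, hS₄]; exact hdIcc _ _ _ _ (by omega)
    · rw [hS₃, hS₄]; exact (hdIcc _ _ _ _ (by omega)).symm
  -- V as a real sum
  have hVeq : ((V A T' : ℚ) : ℝ) = ∑ i ∈ Finset.Icc (m+1) (M+T'), ((wc A T' i : ℝ) - Ab')^2 := by
    rw [hm_def, hM_def, hAb'_def, V]
    push_cast
    rfl
  have hmain : ∑ i ∈ (S₁ ∪ S₂ ∪ S₃ ∪ S₄), ((wc A T' i : ℝ) - Ab')^2 ≤ ((V A T' : ℚ) : ℝ) := by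
    rw [hVeq]
    apply Finset.sum_le_sum_of_subset_of_nonneg hU
    intro i _ _
    positivity
  have hsplit : ∑ i ∈ (S₁ ∪ S₂ ∪ S₃ ∪ S₄), ((wc A T' i : ℝ) - Ab')^2
      = ∑ i ∈ S₁, ((wc A T' i : ℝ) - Ab')^2 + ∑ i ∈ S₂, ((wc A T' i : ℝ) - Ab')^2
        + ∑ i ∈ S₃, ((wc A T' i : ℝ) - Ab')^2 + ∑ i ∈ S₄, ((wc A T' i : ℝ) - Ab')^2 := by
    rw [Finset.sum_union hd4, Finset.sum_union hd3, Finset.sum_union hd12]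
  -- per-set sum lower bounds
  have hsum₁ : (S₁.card : ℝ) * (max (c - α₁) 0 * Ab)^2 ≤ ∑ i ∈ S₁, ((wc A T' i : ℝ) - Ab')^2 := by
    have h := Finset.card_nsmul_le_sum S₁ _ _ hB₁
    rwa [nsmul_eq_mul] at h
  have hsum₂ : (S₂.card : ℝ) * (max (c - (α₂-α₁)) 0 * Ab)^2 ≤ ∑ i ∈ S₂, ((wc A T' i : ℝ) - Ab')^2 := by
    have h := Finset.card_nsmul_le_sum S₂ _ _ hB₂
    rwa [nsmul_eq_mul] at h
  have hsum₃ : (S₃.card : ℝ) * (max (c - α₁) 0 * Ab)^2 ≤ ∑ i ∈ S₃, ((wc A T' i : ℝ) - Ab')^2 := by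
    have h := Finset.card_nsmul_le_sum S₃ _ _ hB₃
    rwa [nsmul_eq_mul] at h
  have hsum₄ : (S₄.card : ℝ) * (max (c - (α₂-α₁)) 0 * Ab)^2 ≤ ∑ i ∈ S₄, ((wc A T' i : ℝ) - Ab')^2 := by
    have h := Finset.card_nsmul_le_sum S₄ _ _ hB₄
    rwa [nsmul_eq_mul] at h
  -- cardinality bounds
  have hcast : ∀ a b : ℤ, ((a - b : ℤ):ℝ) ≤ ((Finset.Icc b (a-1)).card : ℝ) := by
    intro a b
    rw [Int.card_Icc]
    have h := Int.self_le_toNat (a - 1 + 1 - b)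
    have : ((a - 1 + 1 - b : ℤ) : ℝ) ≤ (((a - 1 + 1 - b).toNat : ℤ) : ℝ) := by exact_mod_cast h
    push_cast at this ⊢
    linarith
  have hn₁ : u₁ * (T:ℝ) - 1 ≤ (S₁.card : ℝ) := by
    have h3 := hcast i₁ (m+1)
    have h4 : u₁ * (T:ℝ) ≤ ((i₁ - m : ℤ):ℝ) := hi₁l
    rw [hS₁]
    push_cast at h3 h4 ⊢
    linarith
  have hn₃ : v₁ * (T:ℝ) - 1 ≤ (S₃.card : ℝ) := by
    have h3 := hcast (M+T'+1) (j₁-T+T'+1)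
    have h4 : v₁ * (T:ℝ) ≤ ((M + T + 1 - j₁ : ℤ):ℝ) := hj₁l
    rw [hS₃]
    have h5 : (M+T'+1) - 1 = M + T' := by ring
    rw [h5] at h3
    push_cast at h3 h4 ⊢
    linarith
  have hn₂ : max (u₂ - u₁ - c) 0 * (T:ℝ) - 2 ≤ (S₂.card : ℝ) := by
    have h0 : (0:ℝ) ≤ (S₂.card : ℝ) := Nat.cast_nonneg _
    rcases le_or_gt (u₂ - u₁ - c) 0 with h | h
    · rw [max_eq_right h]
      linarith [h0]
    · rw [max_eq_left h.le]
      have h3 := hcast i₂ (i₁+T')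
      have h4 : u₂ * (T:ℝ) ≤ ((i₂ - m : ℤ):ℝ) := hi₂l
      have h5 : ((i₁ - m : ℤ):ℝ) ≤ u₁ * (T:ℝ) + 1 := hi₁u
      rw [hS₂]
      have h6 : i₂ - 1 = i₂ - 1 := rfl
      push_cast at h3 h4 h5 ⊢
      linarith
  have hn₄ : max (v₂ - v₁ - c) 0 * (T:ℝ) - 2 ≤ (S₄.card : ℝ) := by
    have h0 : (0:ℝ) ≤ (S₄.card : ℝ) := Nat.cast_nonneg _
    rcases le_or_gt (v₂ - v₁ - c) 0 with h | h
    · rw [max_eq_right h]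
      linarith [h0]
    · rw [max_eq_left h.le]
      have h3 := hcast (j₁-T+1) (j₂-T+T'+1)
      have h4 : v₂ * (T:ℝ) ≤ ((M + T + 1 - j₂ : ℤ):ℝ) := hj₂l
      have h5 : ((M + T + 1 - j₁ : ℤ):ℝ) ≤ v₁ * (T:ℝ) + 1 := hj₁u
      rw [hS₄]
      have h6 : (j₁-T+1) - 1 = j₁ - T := by ring
      rw [h6] at h3
      push_cast at h3 h4 h5 ⊢
      linarith
  -- final arithmetic
  rw [ge_iff_le, hs5, hs4]
  set q₁ : ℝ := (max (c - α₁) 0)^2 with hq₁_def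
  set q₂ : ℝ := (max (c - (α₂ - α₁)) 0)^2 with hq₂_def
  set m₂ : ℝ := max (u₂ - u₁ - c) 0 with hm₂_def
  set m₄ : ℝ := max (v₂ - v₁ - c) 0 with hm₄_def
  have hq₁0 : 0 ≤ q₁ := sq_nonneg _
  have hq₂0 : 0 ≤ q₂ := sq_nonneg _
  have hq₁1 : q₁ ≤ 1 := by
    rw [hq₁_def]
    exact pow_le_one₀ (le_max_right _ _) (max_le (by linarith) (by norm_num))
  have hq₂1 : q₂ ≤ 1 := by
    rw [hq₂_def]
    exact pow_le_one₀ (le_max_right _ _) (max_le (by linarith) (by norm_num))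
  have hm₂0 : 0 ≤ m₂ := le_max_right _ _
  have hm₄0 : 0 ≤ m₄ := le_max_right _ _
  have hm₂1 : m₂ ≤ 1 := max_le (by linarith) (by norm_num)
  have hm₄1 : m₄ ≤ 1 := max_le (by linarith) (by norm_num)
  have hQ0 : 0 ≤ u₁ + v₁ := by linarith
  have hQ2 : u₁ + v₁ ≤ 2 := by linarith
  have hb₁ : (max (c - α₁) 0 * Ab)^2 = q₁ * Ab^2 := by rw [hq₁_def]; ring
  have hb₂ : (max (c - (α₂-α₁)) 0 * Ab)^2 = q₂ * Ab^2 := by rw [hq₂_def]; ring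
  rw [hb₁] at hsum₁ hsum₃
  rw [hb₂] at hsum₂ hsum₄
  -- combine
  have hAbsq : Ab^2 ≤ s^4/9 := by
    have h := mul_self_le_mul_self hAb0 hAb3
    calc Ab^2 = Ab * Ab := sq Ab
    _ ≤ (s^2/3) * (s^2/3) := h
    _ = s^4/9 := by ring
  have hstep1 : ((u₁+v₁) * (T:ℝ) - 2) * (q₁ * Ab^2)
      ≤ (S₁.card : ℝ) * (q₁ * Ab^2) + (S₃.card : ℝ) * (q₁ * Ab^2) := by
    have h := mul_le_mul_of_nonneg_right (show (u₁+v₁)*(T:ℝ) - 2 ≤ (S₁.card:ℝ) + (S₃.card:ℝ) by linarith)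
      (show (0:ℝ) ≤ q₁ * Ab^2 by positivity)
    linarith [h]
  have hstep2 : (m₂ * (T:ℝ) - 2) * (q₂ * Ab^2) ≤ (S₂.card : ℝ) * (q₂ * Ab^2) :=
    mul_le_mul_of_nonneg_right hn₂ (by positivity)
  have hstep4 : (m₄ * (T:ℝ) - 2) * (q₂ * Ab^2) ≤ (S₄.card : ℝ) * (q₂ * Ab^2) :=
    mul_le_mul_of_nonneg_right hn₄ (by positivity)
  have hVlow : ((u₁+v₁) * (T:ℝ) - 2) * (q₁ * Ab^2) + (m₂ * (T:ℝ) - 2) * (q₂ * Ab^2)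
      + (m₄ * (T:ℝ) - 2) * (q₂ * Ab^2) ≤ ((V A T' : ℚ) : ℝ) := by
    calc ((u₁+v₁) * (T:ℝ) - 2) * (q₁ * Ab^2) + (m₂ * (T:ℝ) - 2) * (q₂ * Ab^2)
        + (m₄ * (T:ℝ) - 2) * (q₂ * Ab^2)
        ≤ ((S₁.card:ℝ) * (q₁*Ab^2) + (S₃.card:ℝ) * (q₁*Ab^2)) + (S₂.card:ℝ) * (q₂*Ab^2)
          + (S₄.card:ℝ) * (q₂*Ab^2) := by linarith
    _ ≤ ∑ i ∈ S₁, ((wc A T' i : ℝ) - Ab')^2 + ∑ i ∈ S₂, ((wc A T' i : ℝ) - Ab')^2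
        + ∑ i ∈ S₃, ((wc A T' i : ℝ) - Ab')^2 + ∑ i ∈ S₄, ((wc A T' i : ℝ) - Ab')^2 := by
      linarith
    _ = ∑ i ∈ (S₁ ∪ S₂ ∪ S₃ ∪ S₄), ((wc A T' i : ℝ) - Ab')^2 := hsplit.symm
    _ ≤ ((V A T' : ℚ) : ℝ) := hmain
  -- expand and finish
  have hX0 : (0:ℝ) ≤ (T:ℝ) * Ab^2 := by positivity
  have hC₀0 : (0:ℝ) ≤ (2*τ^4 + τ^5)*s^4 := by positivity
  have hfin1 : (u₁+v₁) * q₁ * ((T:ℝ) * Ab^2) ≥ (u₁+v₁) * q₁ * (τ^3*s^5) - 2*((2*τ^4 + τ^5)*s^4) := by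
    have h1 : (u₁+v₁) * q₁ * (τ^3*s^5 - (2*τ^4 + τ^5)*s^4) ≤ (u₁+v₁) * q₁ * ((T:ℝ) * Ab^2) :=
      mul_le_mul_of_nonneg_left hTA (by positivity)
    have h2 : (u₁+v₁) * q₁ * ((2*τ^4 + τ^5)*s^4) ≤ 2*((2*τ^4 + τ^5)*s^4) := by
      apply mul_le_mul_of_nonneg_right _ hC₀0
      calc (u₁+v₁) * q₁ ≤ 2 * 1 := mul_le_mul hQ2 hq₁1 hq₁0 (by norm_num)
      _ = 2 := by norm_num
    linarith [h1, h2]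
  have hfin2 : (m₂+m₄) * q₂ * ((T:ℝ) * Ab^2) ≥ (m₂+m₄) * q₂ * (τ^3*s^5) - 2*((2*τ^4 + τ^5)*s^4) := by
    have h1 : (m₂+m₄) * q₂ * (τ^3*s^5 - (2*τ^4 + τ^5)*s^4) ≤ (m₂+m₄) * q₂ * ((T:ℝ) * Ab^2) :=
      mul_le_mul_of_nonneg_left hTA (by positivity)
    have h2 : (m₂+m₄) * q₂ * ((2*τ^4 + τ^5)*s^4) ≤ 2*((2*τ^4 + τ^5)*s^4) := by
      apply mul_le_mul_of_nonneg_right _ hC₀0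
      calc (m₂+m₄) * q₂ ≤ 2 * 1 := mul_le_mul (by linarith) hq₂1 hq₂0 (by norm_num)
      _ = 2 := by norm_num
    linarith [h1, h2]
  have herr : 2*(q₁*Ab^2) + 2*(q₂*Ab^2) + 2*(q₂*Ab^2) ≤ s^4 := by
    have h1 : q₁*Ab^2 ≤ Ab^2 := by
      have := mul_le_mul_of_nonneg_right hq₁1 (sq_nonneg Ab)
      linarith [this]
    have h2 : q₂*Ab^2 ≤ Ab^2 := by
      have := mul_le_mul_of_nonneg_right hq₂1 (sq_nonneg Ab)
      linarith [this]
    linarith [hAbsq, h1, h2]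
  have hexp : ((u₁+v₁) * (T:ℝ) - 2) * (q₁ * Ab^2) + (m₂ * (T:ℝ) - 2) * (q₂ * Ab^2)
      + (m₄ * (T:ℝ) - 2) * (q₂ * Ab^2)
      = (u₁+v₁) * q₁ * ((T:ℝ) * Ab^2) + (m₂+m₄) * q₂ * ((T:ℝ) * Ab^2)
        - (2*(q₁*Ab^2) + 2*(q₂*Ab^2) + 2*(q₂*Ab^2)) := by ring
  have hgoal : ((m₂ + m₄) * q₂ + (u₁ + v₁) * q₁) * τ^3 * s^5 - (8*τ^4 + 4*τ^5 + 1) * s^4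
      ≤ ((V A T' : ℚ) : ℝ) := by
    have e2 : ((m₂ + m₄) * q₂ + (u₁ + v₁) * q₁) * τ^3 * s^5
        = (u₁+v₁) * q₁ * (τ^3*s^5) + (m₂+m₄) * q₂ * (τ^3*s^5) := by ring
    rw [e2]
    rw [hexp] at hVlow
    linarith [hfin1, hfin2, herr, hVlow]
  exact hgoal
end
end

section
/- For all real numbers w₁, w₂ with 0 ≤ w₁ ≤ w₂ ≤ 2, min(1.7901428 − 0.0803363·w₁ + 0.1078559·w₂, 3.3009719 + 0.7181409·w₁ − 0.7466741·w₂) ≤ 1.99058. -/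
/-!
The minimum is at most the convex combination `9/10 · first + 1/10 · second`, which equals
`1.94122571 - 0.00048858 w₁ + 0.0224029 w₂` and hence is at most `1.98603151` once
`0 ≤ w₁` and `w₂ ≤ 2`.
-/

theorem min_le_add_of_add_eq_one {α : Type*} [Semiring α] [LinearOrder α] [IsOrderedRing α]
    {a b s t : α} (hs : 0 ≤ s) (ht : 0 ≤ t) (hst : s + t = 1) :
    min a b ≤ s * a + t * b :=
  calc min a b = s * min a b + t * min a b := by rw [← add_mul, hst, one_mul]
    _ ≤ s * a + t * b := by gcongr; exacts [min_le_left a b, min_le_right a b]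

theorem min_affine_bounds_le_general (w₁ w₂ : ℝ) (h0 : 0 ≤ w₁) (h2 : w₂ ≤ 2) :
    min (1.7901428 - 0.0803363 * w₁ + 0.1078559 * w₂)
        (3.3009719 + 0.7181409 * w₁ - 0.7466741 * w₂) ≤ 1.99058 :=
  calc _ ≤ 9 / 10 * (1.7901428 - 0.0803363 * w₁ + 0.1078559 * w₂)
          + 1 / 10 * (3.3009719 + 0.7181409 * w₁ - 0.7466741 * w₂) :=
        min_le_add_of_add_eq_one (by norm_num) (by norm_num) (by norm_num)
    _ ≤ 1.99058 := by linarith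

/-- For all `0 ≤ w₁ ≤ w₂ ≤ 2`, the minimum of the two affine bounds from the
two-window argument is at most `1.99058`. -/
theorem min_affine_bounds_le (w₁ w₂ : ℝ) (h0 : 0 ≤ w₁) (h12 : w₁ ≤ w₂) (h2 : w₂ ≤ 2) :
    min (1.7901428 - 0.0803363 * w₁ + 0.1078559 * w₂)
        (3.3009719 + 0.7181409 * w₁ - 0.7466741 * w₂) ≤ 1.99058 :=
  min_affine_bounds_le_general w₁ w₂ h0 h2
end

section
/- Let A be a finite nonempty set of integers and T a positive integer with T ≤ diam(A), and let Ā := Ā(A,T). Then Σ_{i=min(A)+1}^{max(A)+T} (A_i^{(T)} − Ā)² ≥ 2·Σ_{t=1}^{T} (B_t^{(T)} − Ā)², where B_t^{(T)} := (A_{min(A)+t}^{(T)} + A_{max(A)+T+1−t}^{(T)})/2. -/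
open scoped Classical

noncomputable section

/-- Symmetrization inequality: the total squared deviation of the window counts from `Ā`
is at least twice the squared deviation of the symmetrized counts
`B_t^{(T)} = (A_{min A + t}^{(T)} + A_{max A + T + 1 − t}^{(T)})/2` over `1 ≤ t ≤ T`. -/
theorem symmetrization_bound (A : Finset ℤ) (hA : A.Nonempty) (T : ℤ) (hT : 0 < T)
    (hTd : T ≤ diam A) :
    ∑ i ∈ Finset.Icc (Amin A + 1) (Amax A + T), ((wc A T i : ℚ) - Abar A T) ^ 2 ≥
    2 * ∑ t ∈ Finset.Icc 1 T,
      (((wc A T (Amin A + t) : ℚ) + (wc A T (Amax A + T + 1 - t) : ℚ)) / 2 - Abar A T) ^ 2 := by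
  set c := Abar A T with hc
  set f : ℤ → ℚ := fun i => ((wc A T i : ℚ) - c) ^ 2 with hf
  have hnn : ∀ i ∈ Finset.Icc (Amin A + 1) (Amax A + T), 0 ≤ f i := fun i _ => sq_nonneg _
  have hsub : Finset.Icc (Amin A + 1) (Amin A + T) ∪ Finset.Icc (Amax A + 1) (Amax A + T)
      ⊆ Finset.Icc (Amin A + 1) (Amax A + T) := by
    intro i hi
    simp only [Finset.mem_union, Finset.mem_Icc] at hi ⊢
    have hd : Amin A + T ≤ Amax A := by unfold diam at hTd; omega
    omega
  have hdisj : Disjoint (Finset.Icc (Amin A + 1) (Amin A + T))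
      (Finset.Icc (Amax A + 1) (Amax A + T)) := by
    rw [Finset.disjoint_left]
    intro i hi hi'
    simp only [Finset.mem_Icc] at hi hi'
    have hd : Amin A + T ≤ Amax A := by unfold diam at hTd; omega
    omega
  have h1 : ∑ i ∈ Finset.Icc (Amin A + 1) (Amin A + T), f i
      + ∑ i ∈ Finset.Icc (Amax A + 1) (Amax A + T), f i
      ≤ ∑ i ∈ Finset.Icc (Amin A + 1) (Amax A + T), f i := by
    rw [← Finset.sum_union hdisj]
    exact Finset.sum_le_sum_of_subset_of_nonneg hsub (fun i hi _ => sq_nonneg _)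
  have h2 : ∑ i ∈ Finset.Icc (Amin A + 1) (Amin A + T), f i
      = ∑ t ∈ Finset.Icc 1 T, f (Amin A + t) := by
    apply Finset.sum_nbij' (fun i => i - Amin A) (fun t => Amin A + t) <;>
      intros <;> simp_all [Finset.mem_Icc] <;> omega
  have h3 : ∑ i ∈ Finset.Icc (Amax A + 1) (Amax A + T), f i
      = ∑ t ∈ Finset.Icc 1 T, f (Amax A + T + 1 - t) := by
    apply Finset.sum_nbij' (fun i => Amax A + T + 1 - i) (fun t => Amax A + T + 1 - t) <;>
      intros <;> simp_all [Finset.mem_Icc] <;> omega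
  have h4 : 2 * ∑ t ∈ Finset.Icc 1 T,
      (((wc A T (Amin A + t) : ℚ) + (wc A T (Amax A + T + 1 - t) : ℚ)) / 2 - c) ^ 2
      ≤ ∑ t ∈ Finset.Icc 1 T, f (Amin A + t) + ∑ t ∈ Finset.Icc 1 T, f (Amax A + T + 1 - t) := by
    rw [Finset.mul_sum, ← Finset.sum_add_distrib]
    apply Finset.sum_le_sum
    intro t _
    simp only [hf]
    nlinarith [sq_nonneg ((wc A T (Amin A + t) : ℚ) - (wc A T (Amax A + T + 1 - t) : ℚ))]
  calc 2 * ∑ t ∈ Finset.Icc 1 T,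
      (((wc A T (Amin A + t) : ℚ) + (wc A T (Amax A + T + 1 - t) : ℚ)) / 2 - c) ^ 2
      ≤ ∑ t ∈ Finset.Icc 1 T, f (Amin A + t) + ∑ t ∈ Finset.Icc 1 T, f (Amax A + T + 1 - t) := h4
    _ = ∑ i ∈ Finset.Icc (Amin A + 1) (Amin A + T), f i
        + ∑ i ∈ Finset.Icc (Amax A + 1) (Amax A + T), f i := by rw [h2, h3]
    _ ≤ ∑ i ∈ Finset.Icc (Amin A + 1) (Amax A + T), f i := h1
end
end

section
/- Fix a real τ > 0, a real c ∈ (0,1), an integer K ≥ 1, and reals 0 < α₁ < α₂ < … < α_K; set α₀ := 0 and α_j := 0 for all j < 0. There exists a constant C ≥ 0 (depending only on these parameters) such that: for every finite nonempty set A of integers with k := |A|, setting T := ⌈τ·k^{3/2}⌉, T′ := ⌈c·T⌉, Ā := Ā(A,T), with w₀, …, w_{K+1} the symmetrized cutoffs of A at levels α₀, …, α_K for window size T, and for each integer t with 1 ≤ t ≤ T setting y_t := the least j ∈ {1, …, K+1} with w_j·T ≥ t, x_t := the least j ∈ {0, …, K+1} with w_j·T + 1 ≥ t − T′, and B′_t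 := (A_{min(A)+t}^{(T′)} + A_{max(A)+T′+1−t}^{(T′)})/2, the following hold: (a) if y_t ≤ K then B′_t ≤ (α_{y_t} − α_{x_t − 1})·Ā + C; (b) if x_t ≤ K then B′_t ≥ (α_{y_t − 1} − α_{x_t})·Ā − C. -/
open scoped Classical

noncomputable section

/-- The symmetrized window count
`B_t^{(T)} = (A_{min A + t}^{(T)} + A_{max A + T + 1 − t}^{(T)})/2`. -/
def Bsym (A : Finset ℤ) (T t : ℤ) : ℚ :=
  ((wc A T (Amin A + t) : ℚ) + (wc A T (Amax A + T + 1 - t) : ℚ)) / 2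

/-- The symmetrized cutoff at level `a` for window size `T`: `t₀/T` where `t₀` is the
least `t ∈ [0, T]` with `B_t^{(T)} ≥ a·Ā(A,T)`, or `1` if no such `t` exists. -/
def wsym (A : Finset ℤ) (T : ℤ) (a : ℝ) : ℝ :=
  if ∃ t ∈ Finset.Icc (0 : ℤ) T, a * (Abar A T : ℝ) ≤ (Bsym A T t : ℝ) then
    ((sInf {t : ℤ | t ∈ Finset.Icc (0 : ℤ) T ∧
        a * (Abar A T : ℝ) ≤ (Bsym A T t : ℝ)} : ℤ) : ℝ) / (T : ℝ)
  else 1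

lemma Amin_le_Amax {A : Finset ℤ} (hA : A.Nonempty) : Amin A ≤ Amax A := by
  obtain ⟨a, ha⟩ := hA
  exact le_trans (Amin_le ⟨a, ha⟩ ha) (le_Amax ⟨a, ha⟩ ha)

/-- number of elements of `A` below `Amin A + u` -/
def Lc (A : Finset ℤ) (u : ℤ) : ℕ := (A.filter (fun a => a < Amin A + u)).card

/-- number of elements of `A` at least `Amax A + 1 - u` -/
def Rc (A : Finset ℤ) (u : ℤ) : ℕ := (A.filter (fun a => Amax A + 1 - u ≤ a)).card

def Fr (A : Finset ℤ) (u : ℤ) : ℝ := ((Lc A u : ℝ) + (Rc A u : ℝ)) / 2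

lemma Fr_nonneg (A : Finset ℤ) (u : ℤ) : 0 ≤ Fr A u := by unfold Fr; positivity

lemma Lc_mono (A : Finset ℤ) {u v : ℤ} (h : u ≤ v) : Lc A u ≤ Lc A v := by
  apply Finset.card_le_card
  intro a ha
  simp only [Finset.mem_filter] at ha ⊢
  exact ⟨ha.1, by omega⟩

lemma Rc_mono (A : Finset ℤ) {u v : ℤ} (h : u ≤ v) : Rc A u ≤ Rc A v := by
  apply Finset.card_le_card
  intro a ha
  simp only [Finset.mem_filter] at ha ⊢
  exact ⟨ha.1, by omega⟩

lemma Fr_mono (A : Finset ℤ) {u v : ℤ} (h : u ≤ v) : Fr A u ≤ Fr A v := by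
  unfold Fr
  have h1 := Lc_mono A h
  have h2 := Rc_mono A h
  have h1' : (Lc A u : ℝ) ≤ Lc A v := by exact_mod_cast h1
  have h2' : (Rc A u : ℝ) ≤ Rc A v := by exact_mod_cast h2
  linarith

lemma Lc_step (A : Finset ℤ) (u : ℤ) : Lc A (u + 1) ≤ Lc A u + 1 := by
  unfold Lc
  have hsub : A.filter (fun a => a < Amin A + (u + 1)) ⊆
      insert (Amin A + u) (A.filter (fun a => a < Amin A + u)) := by
    intro a ha
    simp only [Finset.mem_filter, Finset.mem_insert] at ha ⊢
    by_cases h : a = Amin A + u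
    · exact Or.inl h
    · exact Or.inr ⟨ha.1, by omega⟩
  calc (A.filter (fun a => a < Amin A + (u + 1))).card
      ≤ (insert (Amin A + u) (A.filter (fun a => a < Amin A + u))).card :=
        Finset.card_le_card hsub
    _ ≤ _ := Finset.card_insert_le _ _

lemma Rc_step (A : Finset ℤ) (u : ℤ) : Rc A (u + 1) ≤ Rc A u + 1 := by
  unfold Rc
  have hsub : A.filter (fun a => Amax A + 1 - (u + 1) ≤ a) ⊆
      insert (Amax A - u) (A.filter (fun a => Amax A + 1 - u ≤ a)) := by
    intro a ha
    simp only [Finset.mem_filter, Finset.mem_insert] at ha ⊢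
    by_cases h : a = Amax A - u
    · exact Or.inl h
    · exact Or.inr ⟨ha.1, by omega⟩
  calc (A.filter (fun a => Amax A + 1 - (u + 1) ≤ a)).card
      ≤ (insert (Amax A - u) (A.filter (fun a => Amax A + 1 - u ≤ a))).card :=
        Finset.card_le_card hsub
    _ ≤ _ := Finset.card_insert_le _ _

lemma Fr_step (A : Finset ℤ) (u : ℤ) : Fr A (u + 1) ≤ Fr A u + 1 := by
  unfold Fr
  have h1 := Lc_step A u
  have h2 := Rc_step A u
  have h1' : (Lc A (u+1) : ℝ) ≤ (Lc A u : ℝ) + 1 := by exact_mod_cast h1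
  have h2' : (Rc A (u+1) : ℝ) ≤ (Rc A u : ℝ) + 1 := by exact_mod_cast h2
  linarith

lemma Lc_zero {A : Finset ℤ} (hA : A.Nonempty) : Lc A 0 = 0 := by
  unfold Lc
  rw [Finset.card_eq_zero, Finset.filter_eq_empty_iff]
  intro a ha
  have := Amin_le hA ha
  omega

lemma Rc_zero {A : Finset ℤ} (hA : A.Nonempty) : Rc A 0 = 0 := by
  unfold Rc
  rw [Finset.card_eq_zero, Finset.filter_eq_empty_iff]
  intro a ha
  have := le_Amax hA ha
  omega

lemma Fr_zero {A : Finset ℤ} (hA : A.Nonempty) : Fr A 0 = 0 := by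
  unfold Fr
  rw [Lc_zero hA, Rc_zero hA]
  norm_num

lemma wc_eq_Lc {A : Finset ℤ} (hA : A.Nonempty) {T u : ℤ} (hu : u ≤ T) :
    wc A T (Amin A + u) = Lc A u := by
  unfold wc Lc
  congr 1
  apply Finset.filter_congr
  intro a ha
  have := Amin_le hA ha
  constructor
  · intro h; exact h.2
  · intro h; exact ⟨by omega, h⟩

lemma wc_eq_Rc {A : Finset ℤ} (hA : A.Nonempty) {T u : ℤ} (hu : u ≤ T) :
    wc A T (Amax A + T + 1 - u) = Rc A u := by
  unfold wc Rc
  congr 1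
  apply Finset.filter_congr
  intro a ha
  have := le_Amax hA ha
  constructor
  · intro h; omega
  · intro h; omega

lemma split_L (A : Finset ℤ) {T' : ℤ} (hT' : 0 ≤ T') (t : ℤ) :
    Lc A t = Lc A (t - T') + wc A T' (Amin A + t) := by
  unfold wc Lc
  have key := Finset.card_filter_add_card_filter_not
    (s := A.filter (fun a => a < Amin A + t)) (p := fun a => a < Amin A + (t - T'))
  rw [Finset.filter_filter, Finset.filter_filter] at key
  rw [← key]
  congr 1
  · congr 1
    apply Finset.filter_congr
    intro a ha
    omega
  · congr 1
    apply Finset.filter_congr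
    intro a ha
    omega

lemma split_R (A : Finset ℤ) {T' : ℤ} (hT' : 0 ≤ T') (t : ℤ) :
    Rc A t = Rc A (t - T') + wc A T' (Amax A + T' + 1 - t) := by
  unfold wc Rc
  have key := Finset.card_filter_add_card_filter_not
    (s := A.filter (fun a => Amax A + 1 - t ≤ a)) (p := fun a => Amax A + 1 - (t - T') ≤ a)
  rw [Finset.filter_filter, Finset.filter_filter] at key
  rw [← key]
  congr 1
  · congr 1
    apply Finset.filter_congr
    intro a ha
    omega
  · congr 1
    apply Finset.filter_congr
    intro a ha
    omega

lemma Bsym_eq_Fr {A : Finset ℤ} (hA : A.Nonempty) {T u : ℤ} (hu : u ≤ T) :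
    (Bsym A T u : ℝ) = Fr A u := by
  unfold Bsym Fr
  rw [wc_eq_Lc hA hu, wc_eq_Rc hA hu]
  push_cast
  ring

lemma Bprime_eq {A : Finset ℤ} {T' : ℤ} (hT' : 0 ≤ T') (t : ℤ) :
    ((wc A T' (Amin A + t) : ℝ) + (wc A T' (Amax A + T' + 1 - t) : ℝ)) / 2
      = Fr A t - Fr A (t - T') := by
  have h1 := split_L A hT' t
  have h2 := split_R A hT' t
  unfold Fr
  have h1' : (Lc A t : ℝ) = Lc A (t - T') + wc A T' (Amin A + t) := by exact_mod_cast h1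
  have h2' : (Rc A t : ℝ) = Rc A (t - T') + wc A T' (Amax A + T' + 1 - t) := by
    exact_mod_cast h2
  rw [h1', h2']
  ring

lemma wsym_UB {A : Finset ℤ} (hA : A.Nonempty) {T : ℤ} (hT : 1 ≤ T) {a : ℝ}
    (ha : 0 ≤ a * (Abar A T : ℝ)) {u : ℤ} (huT : u ≤ T)
    (hu : (u : ℝ) ≤ wsym A T a * (T : ℝ) + 1) :
    Fr A u ≤ a * (Abar A T : ℝ) + 2 := by
  unfold wsym at hu
  by_cases h : ∃ t ∈ Finset.Icc (0 : ℤ) T, a * (Abar A T : ℝ) ≤ (Bsym A T t : ℝ)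
  · rw [if_pos h] at hu
    set S : Set ℤ := {t : ℤ | t ∈ Finset.Icc (0 : ℤ) T ∧
        a * (Abar A T : ℝ) ≤ (Bsym A T t : ℝ)} with hS
    have hne : S.Nonempty := by
      obtain ⟨s, hs1, hs2⟩ := h
      exact ⟨s, hs1, hs2⟩
    have hbdd : BddBelow S := ⟨0, fun s hs => (Finset.mem_Icc.mp hs.1).1⟩
    have hmem : sInf S ∈ S := Int.csInf_mem hne hbdd
    set s0 := sInf S with hs0
    have hs0T : 0 ≤ s0 ∧ s0 ≤ T := Finset.mem_Icc.mp hmem.1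
    have hTne : ((T : ℤ) : ℝ) ≠ 0 := by
      have : (0 : ℝ) < (T : ℝ) := by exact_mod_cast hT
      linarith
    rw [div_mul_cancel₀ _ hTne] at hu
    have hus : u ≤ s0 + 1 := by exact_mod_cast (by push_cast at hu ⊢; linarith : (u : ℝ) ≤ ((s0 + 1 : ℤ) : ℝ))
    have hFs0 : Fr A s0 ≤ a * (Abar A T : ℝ) + 1 := by
      rcases eq_or_lt_of_le hs0T.1 with h0 | h0
      · rw [← h0, Fr_zero hA]
        linarith
      · have hnot : s0 - 1 ∉ S := by
          intro hmem'
          have := csInf_le hbdd hmem'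
          omega
        have hicc : s0 - 1 ∈ Finset.Icc (0 : ℤ) T := Finset.mem_Icc.mpr ⟨by omega, by omega⟩
        have hlt : (Bsym A T (s0 - 1) : ℝ) < a * (Abar A T : ℝ) := by
          by_contra hc
          push_neg at hc
          exact hnot ⟨hicc, hc⟩
        rw [Bsym_eq_Fr hA (by omega)] at hlt
        have hstep := Fr_step A (s0 - 1)
        rw [sub_add_cancel] at hstep
        linarith
    have h1 : Fr A u ≤ Fr A (s0 + 1) := Fr_mono A hus
    have h2 : Fr A (s0 + 1) ≤ Fr A s0 + 1 := Fr_step A s0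
    linarith
  · rw [if_neg h] at hu
    push_neg at h
    by_cases h0 : 0 ≤ u
    · have hb := h u (Finset.mem_Icc.mpr ⟨h0, huT⟩)
      rw [Bsym_eq_Fr hA huT] at hb
      linarith
    · have hm : Fr A u ≤ Fr A 0 := Fr_mono A (by omega)
      rw [Fr_zero hA] at hm
      linarith

lemma wsym_LB {A : Finset ℤ} (hA : A.Nonempty) {T : ℤ} (hT : 1 ≤ T) {a : ℝ}
    {u : ℤ} (huT : u ≤ T) (hu : wsym A T a * (T : ℝ) < (u : ℝ)) :
    a * (Abar A T : ℝ) ≤ Fr A u := by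
  unfold wsym at hu
  by_cases h : ∃ t ∈ Finset.Icc (0 : ℤ) T, a * (Abar A T : ℝ) ≤ (Bsym A T t : ℝ)
  · rw [if_pos h] at hu
    set S : Set ℤ := {t : ℤ | t ∈ Finset.Icc (0 : ℤ) T ∧
        a * (Abar A T : ℝ) ≤ (Bsym A T t : ℝ)} with hS
    have hne : S.Nonempty := by
      obtain ⟨s, hs1, hs2⟩ := h
      exact ⟨s, hs1, hs2⟩
    have hbdd : BddBelow S := ⟨0, fun s hs => (Finset.mem_Icc.mp hs.1).1⟩
    have hmem : sInf S ∈ S := Int.csInf_mem hne hbdd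
    set s0 := sInf S with hs0
    have hs0T : 0 ≤ s0 ∧ s0 ≤ T := Finset.mem_Icc.mp hmem.1
    have hTne : ((T : ℤ) : ℝ) ≠ 0 := by
      have : (0 : ℝ) < (T : ℝ) := by exact_mod_cast hT
      linarith
    rw [div_mul_cancel₀ _ hTne] at hu
    have hus : s0 ≤ u := by
      have : (s0 : ℝ) < (u : ℝ) := hu
      exact_mod_cast le_of_lt this
    have hge := hmem.2
    rw [Bsym_eq_Fr hA hs0T.2] at hge
    exact le_trans hge (Fr_mono A hus)
  · rw [if_neg h, one_mul] at hu
    exfalso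
    have : (u : ℝ) ≤ (T : ℝ) := by exact_mod_cast huT
    linarith

/-- Key estimates on the symmetrized small-window counts `B′_t` in terms of the
levels `α` and the cutoff indices `x_t`, `y_t`:
(a) if `y_t ≤ K` then `B′_t ≤ (α_{y_t} − α_{x_t−1})·Ā + O(1)`;
(b) if `x_t ≤ K` then `B′_t ≥ (α_{y_t−1} − α_{x_t})·Ā − O(1)`. -/
theorem small_window_estimates (τ c : ℝ) (hτ : 0 < τ) (hc0 : 0 < c) (hc1 : c < 1)
    (K : ℕ) (hK : 1 ≤ K) (α : ℕ → ℝ) (hα0 : α 0 = 0) (hαpos : 0 < α 1)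
    (hmono : ∀ i j : ℕ, 1 ≤ i → i < j → j ≤ K → α i < α j) :
    ∃ C : ℝ, 0 ≤ C ∧ ∀ A : Finset ℤ, A.Nonempty →
      let k : ℕ := A.card
      let T : ℤ := ⌈τ * (k : ℝ) ^ ((3 : ℝ) / 2)⌉
      let T' : ℤ := ⌈c * (T : ℝ)⌉
      let w : ℕ → ℝ := fun j => if j = 0 then 0 else if j = K + 1 then 1 else wsym A T (α j)
      ∀ t : ℤ, 1 ≤ t → t ≤ T →
        let y : ℕ := sInf {j : ℕ | 1 ≤ j ∧ j ≤ K + 1 ∧ (t : ℝ) ≤ w j * (T : ℝ)}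
        let x : ℕ := sInf {j : ℕ | j ≤ K + 1 ∧ (t : ℝ) - (T' : ℝ) ≤ w j * (T : ℝ) + 1}
        let B' : ℝ := ((wc A T' (Amin A + t) : ℝ) + (wc A T' (Amax A + T' + 1 - t) : ℝ)) / 2
        (y ≤ K → B' ≤ (α y - α (x - 1)) * (Abar A T : ℝ) + C) ∧
        (x ≤ K → B' ≥ (α (y - 1) - α x) * (Abar A T : ℝ) - C) := by
  refine ⟨2, by norm_num, ?_⟩
  intro A hA
  intro k T T' w t ht1 htT y x B'
  -- basic facts
  have hk : 1 ≤ k := Finset.card_pos.mpr hA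
  have hkR : (1 : ℝ) ≤ (k : ℝ) := by exact_mod_cast hk
  have hTpos : 0 < T := by
    have h : (0 : ℝ) < τ * (k : ℝ) ^ ((3 : ℝ) / 2) :=
      mul_pos hτ (Real.rpow_pos_of_pos (by linarith) _)
    exact Int.ceil_pos.mpr h
  have hT : (1 : ℤ) ≤ T := hTpos
  have hTR : (0 : ℝ) < (T : ℝ) := by exact_mod_cast hTpos
  have hT'pos : 0 < T' := Int.ceil_pos.mpr (mul_pos hc0 hTR)
  have hT' : (1 : ℤ) ≤ T' := hT'pos
  have hdiam : 0 ≤ diam A := sub_nonneg.mpr (Amin_le_Amax hA)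
  have hAb : (0 : ℝ) ≤ (Abar A T : ℝ) := by
    have hq : (0 : ℚ) ≤ Abar A T := by
      unfold Abar
      apply div_nonneg
      · have h1 : (0 : ℚ) ≤ (T : ℚ) := by exact_mod_cast le_of_lt hTpos
        exact mul_nonneg (by positivity) h1
      · have h1 : (1 : ℚ) ≤ (T : ℚ) := by exact_mod_cast hT
        have h2 : (0 : ℚ) ≤ (diam A : ℚ) := by exact_mod_cast hdiam
        linarith
    exact_mod_cast hq
  have hαnn : ∀ j, j ≤ K → 0 ≤ α j := by
    intro j hj
    match j with
    | 0 => rw [hα0]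
    | 1 => exact le_of_lt hαpos
    | (n + 2) => exact le_of_lt (lt_trans hαpos (hmono 1 (n + 2) le_rfl (by omega) hj))
  -- B' identity
  have hBp : B' = Fr A t - Fr A (t - T') := Bprime_eq (by omega) t
  -- y facts
  have hyne : ({j : ℕ | 1 ≤ j ∧ j ≤ K + 1 ∧ (t : ℝ) ≤ w j * (T : ℝ)}).Nonempty := by
    refine ⟨K + 1, le_add_self, le_rfl, ?_⟩
    have hw : w (K + 1) = 1 := by simp [w]
    rw [hw, one_mul]
    exact_mod_cast htT
  have hy : y ∈ {j : ℕ | 1 ≤ j ∧ j ≤ K + 1 ∧ (t : ℝ) ≤ w j * (T : ℝ)} := Nat.sInf_mem hyne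
  obtain ⟨hy1, hy2, hy3⟩ := hy
  -- x facts
  have hxne : ({j : ℕ | j ≤ K + 1 ∧ (t : ℝ) - (T' : ℝ) ≤ w j * (T : ℝ) + 1}).Nonempty := by
    refine ⟨K + 1, le_rfl, ?_⟩
    have hw : w (K + 1) = 1 := by simp [w]
    rw [hw, one_mul]
    have h1 : (t : ℝ) ≤ (T : ℝ) := by exact_mod_cast htT
    have h2 : (1 : ℝ) ≤ (T' : ℝ) := by exact_mod_cast hT'
    linarith
  have hx : x ∈ {j : ℕ | j ≤ K + 1 ∧ (t : ℝ) - (T' : ℝ) ≤ w j * (T : ℝ) + 1} :=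
    Nat.sInf_mem hxne
  obtain ⟨hx1, hx2⟩ := hx
  have htT'T : t - T' ≤ T := by omega
  constructor
  · -- part (a)
    intro hyK
    have hwy : w y = wsym A T (α y) := by
      simp only [w]
      rw [if_neg (by omega), if_neg (by omega)]
    have hup : Fr A t ≤ α y * (Abar A T : ℝ) + 2 := by
      apply wsym_UB hA hT (mul_nonneg (hαnn y hyK) hAb) htT
      rw [← hwy]
      linarith
    have hlow : α (x - 1) * (Abar A T : ℝ) ≤ Fr A (t - T') := by
      by_cases hx2' : 2 ≤ x
      · have hnm : x - 1 ∉ {j : ℕ | j ≤ K + 1 ∧ (t : ℝ) - (T' : ℝ) ≤ w j * (T : ℝ) + 1} :=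
          Nat.notMem_of_lt_sInf (by omega)
        have hgt : w (x - 1) * (T : ℝ) + 1 < (t : ℝ) - (T' : ℝ) := by
          by_contra hc
          push_neg at hc
          exact hnm ⟨by omega, hc⟩
        have hwx : w (x - 1) = wsym A T (α (x - 1)) := by
          simp only [w]
          rw [if_neg (by omega), if_neg (by omega)]
        apply wsym_LB hA hT htT'T
        rw [← hwx]
        push_cast
        linarith
      · have hx0 : x - 1 = 0 := by omega
        rw [hx0, hα0, zero_mul]
        exact Fr_nonneg A _
    rw [hBp]
    nlinarith [hup, hlow]
  · -- part (b)
    intro hxK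
    have hlow : α (y - 1) * (Abar A T : ℝ) ≤ Fr A t := by
      by_cases hy2' : 2 ≤ y
      · have hnm : y - 1 ∉ {j : ℕ | 1 ≤ j ∧ j ≤ K + 1 ∧ (t : ℝ) ≤ w j * (T : ℝ)} :=
          Nat.notMem_of_lt_sInf (by omega)
        have hgt : w (y - 1) * (T : ℝ) < (t : ℝ) := by
          by_contra hc
          push_neg at hc
          exact hnm ⟨by omega, by omega, hc⟩
        have hwy : w (y - 1) = wsym A T (α (y - 1)) := by
          simp only [w]
          rw [if_neg (by omega), if_neg (by omega)]
        apply wsym_LB hA hT htT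
        rw [← hwy]
        exact hgt
      · have hy0 : y - 1 = 0 := by omega
        rw [hy0, hα0, zero_mul]
        exact Fr_nonneg A _
    have hup : Fr A (t - T') ≤ α x * (Abar A T : ℝ) + 2 := by
      by_cases hx1' : 1 ≤ x
      · have hwx : w x = wsym A T (α x) := by
          simp only [w]
          rw [if_neg (by omega), if_neg (by omega)]
        apply wsym_UB hA hT (mul_nonneg (hαnn x hxK) hAb) htT'T
        rw [← hwx]
        push_cast
        linarith
      · have hx0 : x = 0 := by omega
        have hw0 : w x = 0 := by rw [hx0]; simp [w]
        rw [hw0, zero_mul] at hx2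
        have htle : t - T' ≤ 1 := by
          have : ((t - T' : ℤ) : ℝ) ≤ 1 := by push_cast; linarith
          exact_mod_cast this
        have h1 : Fr A (t - T') ≤ Fr A 1 := Fr_mono A htle
        have h2 : Fr A 1 ≤ Fr A 0 + 1 := by
          have := Fr_step A 0
          simpa using this
        rw [Fr_zero hA] at h2
        rw [hx0, hα0, zero_mul]
        linarith
    rw [ge_iff_le, hBp]
    nlinarith [hlow, hup]
end
end
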